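/- Suppose 0 < M < 1 and q ≥ 0. If u ∈ 𝔸_M is a ground state (ℰ_q[u] ≤ ℰ_q[v] for all v ∈ 𝔸_M) with u₁(x) > 0 and u₋₁(x) > 0 for all x, then q ∫ u₀² ≥ β_s ∫ u₀²(u₁ − u₋₁)²(2 + u₀²/(u₁ u₋₁)) + (1/2) ∫ ( S(u₁, u₀)/u₁² + S(u₋₁, u₀)/u₋₁² ), and in particular the integrands on the right-hand side are integrable. -/

import Mathlib

open MeasureTheory
open scoped RealInnerProductSpace

noncomputable section

abbrev E3 := EuclideanSpace ℝ (Fin 3)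

/-- Pointwise squared norm `|u|² = u₁² + u₀² + u₋₁²` of a triple of functions. -/
def nsq (u1 u0 um1 : E3 → ℝ) (x : E3) : ℝ := u1 x ^ 2 + u0 x ^ 2 + um1 x ^ 2

/-- The energy functional `ℰ_q[u]`. -/
def energy (V : E3 → ℝ) (βn βs q : ℝ) (u1 u0 um1 : E3 → ℝ) : ℝ :=
  ∫ x : E3,
    (‖gradient u1 x‖ ^ 2 + ‖gradient u0 x‖ ^ 2 + ‖gradient um1 x‖ ^ 2
      + V x * nsq u1 u0 um1 x
      + βn * (nsq u1 u0 um1 x) ^ 2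
      + βs * (2 * u0 x ^ 2 * (u1 x - um1 x) ^ 2 + (u1 x ^ 2 - um1 x ^ 2) ^ 2)
      + q * (u1 x ^ 2 + um1 x ^ 2))

/-- The admissible class `𝔸_M`: triples of nonnegative `C¹` functions with the
required integrability and the constraints `𝒩[u] = 1`, `ℳ[u] = M`. -/
structure Admissible (V : E3 → ℝ) (M : ℝ) (u1 u0 um1 : E3 → ℝ) : Prop where
  smooth1 : ContDiff ℝ 1 u1
  smooth0 : ContDiff ℝ 1 u0
  smoothm1 : ContDiff ℝ 1 um1
  nonneg1 : ∀ x, 0 ≤ u1 x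
  nonneg0 : ∀ x, 0 ≤ u0 x
  nonnegm1 : ∀ x, 0 ≤ um1 x
  l2_1 : Integrable (fun x => u1 x ^ 2)
  l2_0 : Integrable (fun x => u0 x ^ 2)
  l2_m1 : Integrable (fun x => um1 x ^ 2)
  grad2_1 : Integrable (fun x => ‖gradient u1 x‖ ^ 2)
  grad2_0 : Integrable (fun x => ‖gradient u0 x‖ ^ 2)
  grad2_m1 : Integrable (fun x => ‖gradient um1 x‖ ^ 2)
  l4_1 : Integrable (fun x => u1 x ^ 4)
  l4_0 : Integrable (fun x => u0 x ^ 4)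
  l4_m1 : Integrable (fun x => um1 x ^ 4)
  pot : Integrable (fun x => V x * nsq u1 u0 um1 x)
  mass : ∫ x : E3, nsq u1 u0 um1 x = 1
  magnetization : ∫ x : E3, (u1 x ^ 2 - um1 x ^ 2) = M

/-- Hypotheses on the trap potential `V`: measurable, nonnegative, locally bounded,
and tending to infinity at infinity. -/
structure TrapPotential (V : E3 → ℝ) : Prop where
  meas : Measurable V
  nonneg : ∀ x, 0 ≤ V x
  bddOnBalls : ∀ r : ℝ, ∃ C : ℝ, ∀ x : E3, ‖x‖ ≤ r → V x ≤ C
  tendsToInfty : ∀ C : ℝ, 0 < C → ∃ R : ℝ, 0 < R ∧ ∀ x : E3, R ≤ ‖x‖ → C ≤ V x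

/-- `u` is a ground state: admissible and minimizes the energy over `𝔸_M`. -/
def IsGroundState (V : E3 → ℝ) (βn βs q M : ℝ) (u1 u0 um1 : E3 → ℝ) : Prop :=
  Admissible V M u1 u0 um1 ∧
    ∀ v1 v0 vm1 : E3 → ℝ, Admissible V M v1 v0 vm1 →
      energy V βn βs q u1 u0 um1 ≤ energy V βn βs q v1 v0 vm1

/-- `S(f,g) = |f ∇g − g ∇f|²`. -/
def Sfun (f g : E3 → ℝ) (x : E3) : ℝ := ‖f x • gradient g x - g x • gradient f x‖ ^ 2

/-!
Move a fraction `ε` of the mass of `u₀` equally into `u₁` and `u₋₁`: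
`v_ε = (√(u₁² + ε u₀²/2), √(1 - ε) u₀, √(u₋₁² + ε u₀²/2))`. This keeps `|u|²` and `u₁² - u₋₁²`
pointwise, so `v_ε` is admissible and `ℰ_q[v_ε] ≥ ℰ_q[u]`. Pointwise the energy density changes
by `ε (q u₀² - G_ε)`, where `G_ε = transferGain βs u₁ u₀ u₋₁ ε ≥ 0` collects what is gained in
kinetic energy (the gradient of `√(a² + t b²)` has squared norm
`|∇a|² + t |∇b|² - t S(a, b) / (a² + t b²)`) and in the spin-exchange term
(`|√(a² + s) - √(c² + s)| ≤ |a - c|`). Hence `∫ G_ε ≤ q ∫ u₀²`; as `ε → 0`, `G_ε` tends pointwise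
to the right-hand integrand (a derivative at `ε = 0` for the spin part), and Fatou's lemma gives
integrability and the inequality.
-/

open Filter Topology

def sqrtSqAdd {α : Type*} (a b : α → ℝ) (t : ℝ) (x : α) : ℝ := √(a x ^ 2 + t * b x ^ 2)

theorem sq_sqrtSqAdd {α : Type*} (a b : α → ℝ) {t : ℝ} (ht : 0 ≤ t) (x : α) :
    sqrtSqAdd a b t x ^ 2 = a x ^ 2 + t * b x ^ 2 :=
  Real.sq_sqrt (add_nonneg (sq_nonneg _) (mul_nonneg ht (sq_nonneg _)))

section Integrability

variable {α : Type*} [MeasurableSpace α] {μ : Measure α} {a b : α → ℝ} {t : ℝ}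

theorem integrable_sqrtSqAdd_sq (ha : Integrable (fun x => a x ^ 2) μ)
    (hb : Integrable (fun x => b x ^ 2) μ) (ht : 0 ≤ t) :
    Integrable (fun x => sqrtSqAdd a b t x ^ 2) μ := by
  simp_rw [sq_sqrtSqAdd a b ht]
  exact ha.add (hb.const_mul t)

theorem integrable_sqrtSqAdd_pow_four (hm : AEStronglyMeasurable (sqrtSqAdd a b t) μ)
    (ha : Integrable (fun x => a x ^ 4) μ) (hb : Integrable (fun x => b x ^ 4) μ) (ht : 0 ≤ t) :
    Integrable (fun x => sqrtSqAdd a b t x ^ 4) μ := by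
  refine ((ha.const_mul 2).add (hb.const_mul (2 * t ^ 2))).mono' (hm.pow 4)
    (ae_of_all _ fun x => ?_)
  have h4 : sqrtSqAdd a b t x ^ 4 = (a x ^ 2 + t * b x ^ 2) ^ 2 := by
    rw [← sq_sqrtSqAdd a b ht]; ring
  rw [Real.norm_of_nonneg (by positivity), h4, Pi.add_apply]
  nlinarith [sq_nonneg (a x ^ 2 - t * b x ^ 2)]

end Integrability

section Calculus

variable {E : Type*} [NormedAddCommGroup E] [InnerProductSpace ℝ E]

theorem norm_add_smul_sq_add_norm_sub_smul_sq (p r t : ℝ) (X Y : E) :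
    ‖p • X + (t * r) • Y‖ ^ 2 + t * ‖p • Y - r • X‖ ^ 2
      = (p ^ 2 + t * r ^ 2) * (‖X‖ ^ 2 + t * ‖Y‖ ^ 2) := by
  rw [norm_add_sq_real, norm_sub_sq_real]
  simp only [norm_smul, inner_smul_left, inner_smul_right, real_inner_comm X Y, mul_pow,
    Real.norm_eq_abs, sq_abs, RCLike.conj_to_real]
  ring

theorem contDiff_sqrtSqAdd {a b : E → ℝ} {t : ℝ} {n : WithTop ℕ∞} (ha : ContDiff ℝ n a)
    (hb : ContDiff ℝ n b) (hpos : ∀ x, a x ^ 2 + t * b x ^ 2 ≠ 0) :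
    ContDiff ℝ n (sqrtSqAdd a b t) :=
  ((ha.pow 2).add (contDiff_const.mul (hb.pow 2))).sqrt hpos

variable [CompleteSpace E]

theorem ContDiff.continuous_gradient {f : E → ℝ} (hf : ContDiff ℝ 1 f) :
    Continuous (gradient f) :=
  (InnerProductSpace.toDual ℝ E).symm.continuous.comp (hf.continuous_fderiv one_ne_zero)

theorem gradient_const_mul {f : E → ℝ} {x : E} (c : ℝ) (hf : DifferentiableAt ℝ f x) :
    gradient (fun y => c * f y) x = c • gradient f x := by
  refine (hasGradientAt_iff_hasFDerivAt.2 ?_).gradient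
  rw [map_smul, toDual_gradient]
  exact hf.hasFDerivAt.const_mul c

theorem hasGradientAt_sqrtSqAdd {a b : E → ℝ} {t : ℝ} {x : E} (ha : DifferentiableAt ℝ a x)
    (hb : DifferentiableAt ℝ b x) (hx : a x ^ 2 + t * b x ^ 2 ≠ 0) :
    HasGradientAt (sqrtSqAdd a b t)
      ((sqrtSqAdd a b t x)⁻¹ • (a x • gradient a x + (t * b x) • gradient b x)) x := by
  have hw := ((ha.hasFDerivAt.pow 2).add ((hb.hasFDerivAt.pow 2).const_mul t)).sqrt hx
  rw [hasGradientAt_iff_hasFDerivAt]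
  refine hw.congr_fderiv ?_
  rw [map_smul, map_add, map_smul, map_smul, toDual_gradient, toDual_gradient]
  ext v
  simp only [sqrtSqAdd, FunLike.coe_smul, FunLike.coe_add, Pi.smul_apply, smul_eq_mul,
    Pi.add_apply, nsmul_eq_mul]
  field_simp
  ring

theorem norm_gradient_sqrtSqAdd_sq {a b : E → ℝ} {t : ℝ} {x : E} (ha : DifferentiableAt ℝ a x)
    (hb : DifferentiableAt ℝ b x) (ht : 0 ≤ t) (hx : 0 < a x ^ 2 + t * b x ^ 2) :
    ‖gradient (sqrtSqAdd a b t) x‖ ^ 2 = ‖gradient a x‖ ^ 2 + t * ‖gradient b x‖ ^ 2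
      - t * ‖a x • gradient b x - b x • gradient a x‖ ^ 2 / (a x ^ 2 + t * b x ^ 2) := by
  rw [(hasGradientAt_sqrtSqAdd ha hb hx.ne').gradient, norm_smul, mul_pow, norm_inv,
    Real.norm_eq_abs, inv_pow, sq_abs, sq_sqrtSqAdd a b ht, eq_sub_iff_add_eq,
    inv_mul_eq_div, ← add_div, div_eq_iff hx.ne', norm_add_smul_sq_add_norm_sub_smul_sq,
    mul_comm]

theorem integrable_norm_gradient_sqrtSqAdd_sq [MeasurableSpace E] [OpensMeasurableSpace E]
    {μ : Measure E} {a b : E → ℝ} {t : ℝ} (ha : ContDiff ℝ 1 a) (hb : ContDiff ℝ 1 b) (ht : 0 ≤ t)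
    (hpos : ∀ x, 0 < a x ^ 2 + t * b x ^ 2)
    (hga : Integrable (fun x => ‖gradient a x‖ ^ 2) μ)
    (hgb : Integrable (fun x => ‖gradient b x‖ ^ 2) μ) :
    Integrable (fun x => ‖gradient (sqrtSqAdd a b t) x‖ ^ 2) μ := by
  have hc := (contDiff_sqrtSqAdd ha hb fun x => (hpos x).ne').continuous_gradient
  refine (hga.add (hgb.const_mul t)).mono' (hc.norm.pow 2).aestronglyMeasurable
    (ae_of_all _ fun x => ?_)
  rw [Real.norm_of_nonneg (by positivity),
    norm_gradient_sqrtSqAdd_sq (ha.differentiable one_ne_zero x) (hb.differentiable one_ne_zero x)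
      ht (hpos x), Pi.add_apply, sub_le_self_iff]
  exact div_nonneg (mul_nonneg ht (sq_nonneg _)) (hpos x).le

end Calculus

theorem sub_sq_sqrt_add_le (a c : ℝ) {s : ℝ} (hs : 0 ≤ s) :
    (√(a ^ 2 + s) - √(c ^ 2 + s)) ^ 2 ≤ (a - c) ^ 2 := by
  have hA := Real.sq_sqrt (by positivity : 0 ≤ a ^ 2 + s)
  have hC := Real.sq_sqrt (by positivity : 0 ≤ c ^ 2 + s)
  have hAC : a * c + s ≤ √(a ^ 2 + s) * √(c ^ 2 + s) := by
    rw [← Real.sqrt_mul (by positivity)]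
    exact (le_abs_self _).trans (Real.abs_le_sqrt (by nlinarith [sq_nonneg (a - c)]))
  nlinarith

theorem integrable_and_integral_le_of_tendsto {α ι : Type*} [MeasurableSpace α] {μ : Measure α}
    {l : Filter ι} [l.NeBot] [l.IsCountablyGenerated] {f : ι → α → ℝ} {g : α → ℝ} {C : ℝ}
    (hf : ∀ i, Integrable (f i) μ) (hf0 : ∀ i x, 0 ≤ f i x)
    (hfg : ∀ᵐ x ∂μ, Tendsto (fun i => f i x) l (𝓝 (g x))) (hC : ∀ i, ∫ x, f i x ∂μ ≤ C) :
    Integrable g μ ∧ ∫ x, g x ∂μ ≤ C := by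
  have hg0 : 0 ≤ᵐ[μ] g := hfg.mono fun x hx => ge_of_tendsto' hx fun i => hf0 i x
  have hgm : AEStronglyMeasurable g μ :=
    aestronglyMeasurable_of_tendsto_ae l (fun i => (hf i).1) hfg
  have hC0 : 0 ≤ C := by
    obtain ⟨i⟩ := l.nonempty_of_neBot
    exact (integral_nonneg (hf0 i)).trans (hC i)
  have hlint : ∫⁻ x, ENNReal.ofReal (g x) ∂μ ≤ ENNReal.ofReal C :=
    calc ∫⁻ x, ENNReal.ofReal (g x) ∂μ
        = ∫⁻ x, liminf (fun i => ENNReal.ofReal (f i x)) l ∂μ :=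
          lintegral_congr_ae (hfg.mono fun x hx => (ENNReal.tendsto_ofReal hx).liminf_eq.symm)
      _ ≤ liminf (fun i => ∫⁻ x, ENNReal.ofReal (f i x) ∂μ) l :=
          lintegral_liminf_le' fun i => (hf i).1.aemeasurable.ennreal_ofReal
      _ ≤ ENNReal.ofReal C := by
          refine liminf_le_of_frequently_le' (Frequently.of_forall fun i => ?_)
          rw [← ofReal_integral_eq_lintegral_ofReal (hf i) (Eventually.of_forall (hf0 i))]
          exact ENNReal.ofReal_le_ofReal (hC i)
  refine ⟨⟨hgm, (hasFiniteIntegral_iff_ofReal hg0).2 (hlint.trans_lt ENNReal.ofReal_lt_top)⟩, ?_⟩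
  rw [integral_eq_lintegral_of_nonneg_ae hg0 hgm]
  exact ENNReal.toReal_le_of_le_ofReal hC0 hlint


theorem continuous_Sfun {f g : E3 → ℝ} (hf : ContDiff ℝ 1 f) (hg : ContDiff ℝ 1 g) :
    Continuous (Sfun f g) :=
  ((hf.continuous.smul hg.continuous_gradient).sub
    (hg.continuous.smul hf.continuous_gradient)).norm.pow 2

def energyDensity (V : E3 → ℝ) (βn βs q : ℝ) (u1 u0 um1 : E3 → ℝ) (x : E3) : ℝ :=
  ‖gradient u1 x‖ ^ 2 + ‖gradient u0 x‖ ^ 2 + ‖gradient um1 x‖ ^ 2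
    + V x * nsq u1 u0 um1 x
    + βn * (nsq u1 u0 um1 x) ^ 2
    + βs * (2 * u0 x ^ 2 * (u1 x - um1 x) ^ 2 + (u1 x ^ 2 - um1 x ^ 2) ^ 2)
    + q * (u1 x ^ 2 + um1 x ^ 2)

theorem energy_eq_integral_energyDensity (V : E3 → ℝ) (βn βs q : ℝ) (u1 u0 um1 : E3 → ℝ) :
    energy V βn βs q u1 u0 um1 = ∫ x, energyDensity V βn βs q u1 u0 um1 x :=
  rfl

theorem Admissible.integrable_energyDensity {V : E3 → ℝ} {M : ℝ} {u1 u0 um1 : E3 → ℝ}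
    (hA : Admissible V M u1 u0 um1) (βn βs q : ℝ) :
    Integrable (energyDensity V βn βs q u1 u0 um1) := by
  have c1 := hA.smooth1.continuous
  have c0 := hA.smooth0.continuous
  have cm1 := hA.smoothm1.continuous
  have hquartic : Integrable (fun x => u1 x ^ 4 + u0 x ^ 4 + um1 x ^ 4) :=
    (hA.l4_1.add hA.l4_0).add hA.l4_m1
  have hnsq : Integrable (fun x => nsq u1 u0 um1 x ^ 2) := by
    refine (hquartic.const_mul 3).mono'
      ((((c1.pow 2).add (c0.pow 2)).add (cm1.pow 2)).pow 2).aestronglyMeasurable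
      (ae_of_all _ fun x => ?_)
    rw [Real.norm_of_nonneg (sq_nonneg _), nsq]
    nlinarith [sq_nonneg (u1 x ^ 2 - u0 x ^ 2), sq_nonneg (u0 x ^ 2 - um1 x ^ 2),
      sq_nonneg (u1 x ^ 2 - um1 x ^ 2)]
  have hspin : Integrable
      (fun x => 2 * u0 x ^ 2 * (u1 x - um1 x) ^ 2 + (u1 x ^ 2 - um1 x ^ 2) ^ 2) := by
    refine (hquartic.const_mul 4).mono'
      (((continuous_const.mul (c0.pow 2)).mul ((c1.sub cm1).pow 2)).add
        (((c1.pow 2).sub (cm1.pow 2)).pow 2)).aestronglyMeasurable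
      (ae_of_all _ fun x => ?_)
    rw [Real.norm_of_nonneg (by positivity)]
    nlinarith [sq_nonneg (u1 x ^ 2 - u0 x ^ 2), sq_nonneg (u0 x ^ 2 - um1 x ^ 2),
      sq_nonneg (u1 x ^ 2 - um1 x ^ 2), sq_nonneg ((u1 x - um1 x) * u0 x),
      sq_nonneg (u1 x + um1 x)]
  exact (((((hA.grad2_1.add hA.grad2_0).add hA.grad2_m1).add hA.pot).add
    (hnsq.const_mul βn)).add (hspin.const_mul βs)).add ((hA.l2_1.add hA.l2_m1).const_mul q)

section Perturbation

variable {u1 u0 um1 : E3 → ℝ} {ε : ℝ}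

theorem nsq_perturb (hε0 : 0 ≤ ε) (hε1 : ε ≤ 1) (x : E3) :
    nsq (sqrtSqAdd u1 u0 (ε / 2)) (fun y => √(1 - ε) * u0 y) (sqrtSqAdd um1 u0 (ε / 2)) x
      = nsq u1 u0 um1 x := by
  rw [nsq, nsq, sq_sqrtSqAdd _ _ (by linarith), sq_sqrtSqAdd _ _ (by linarith), mul_pow,
    Real.sq_sqrt (by linarith)]
  ring

theorem Admissible.perturb {V : E3 → ℝ} {M : ℝ} (hA : Admissible V M u1 u0 um1)
    (hu1 : ∀ x, 0 < u1 x) (hum1 : ∀ x, 0 < um1 x) (hε0 : 0 ≤ ε) (hε1 : ε ≤ 1) :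
    Admissible V M (sqrtSqAdd u1 u0 (ε / 2)) (fun x => √(1 - ε) * u0 x)
      (sqrtSqAdd um1 u0 (ε / 2)) := by
  have ht : 0 ≤ ε / 2 := by linarith
  have hpos1 : ∀ x, 0 < u1 x ^ 2 + ε / 2 * u0 x ^ 2 := fun x => by have := hu1 x; positivity
  have hposm1 : ∀ x, 0 < um1 x ^ 2 + ε / 2 * u0 x ^ 2 := fun x => by have := hum1 x; positivity
  have hs1 := contDiff_sqrtSqAdd hA.smooth1 hA.smooth0 fun x => (hpos1 x).ne'
  have hsm1 := contDiff_sqrtSqAdd hA.smoothm1 hA.smooth0 fun x => (hposm1 x).ne'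
  have hsq : √(1 - ε) ^ 2 = 1 - ε := Real.sq_sqrt (by linarith)
  refine ⟨hs1, contDiff_const.mul hA.smooth0, hsm1, fun x => Real.sqrt_nonneg _,
    fun x => mul_nonneg (Real.sqrt_nonneg _) (hA.nonneg0 x), fun x => Real.sqrt_nonneg _,
    integrable_sqrtSqAdd_sq hA.l2_1 hA.l2_0 ht, ?_, integrable_sqrtSqAdd_sq hA.l2_m1 hA.l2_0 ht,
    integrable_norm_gradient_sqrtSqAdd_sq hA.smooth1 hA.smooth0 ht hpos1 hA.grad2_1 hA.grad2_0,
    ?_,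
    integrable_norm_gradient_sqrtSqAdd_sq hA.smoothm1 hA.smooth0 ht hposm1 hA.grad2_m1 hA.grad2_0,
    integrable_sqrtSqAdd_pow_four hs1.continuous.aestronglyMeasurable hA.l4_1 hA.l4_0 ht, ?_,
    integrable_sqrtSqAdd_pow_four hsm1.continuous.aestronglyMeasurable hA.l4_m1 hA.l4_0 ht,
    ?_, ?_, ?_⟩
  · simp_rw [mul_pow, hsq]
    exact hA.l2_0.const_mul _
  · simp_rw [gradient_const_mul _ (hA.smooth0.differentiable one_ne_zero _), norm_smul, mul_pow,
      Real.norm_eq_abs, sq_abs, hsq]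
    exact hA.grad2_0.const_mul _
  · simp_rw [mul_pow]
    exact hA.l4_0.const_mul _
  · simp_rw [nsq_perturb hε0 hε1]
    exact hA.pot
  · simp_rw [nsq_perturb hε0 hε1]
    exact hA.mass
  · simp_rw [sq_sqrtSqAdd _ _ ht, add_sub_add_right_eq_sub]
    exact hA.magnetization

end Perturbation

/-- Along the perturbation, `2 v₀² (v₁ - v₋₁)² = 2 u₀² * spinExchangeFactor u₁ u₀ u₋₁ ε`. -/
def spinExchangeFactor (a b c ε : ℝ) : ℝ :=
  (1 - ε) * (√(a ^ 2 + ε / 2 * b ^ 2) - √(c ^ 2 + ε / 2 * b ^ 2)) ^ 2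

theorem spinExchangeFactor_le_sq (a b c : ℝ) {ε : ℝ} (hε0 : 0 ≤ ε) :
    spinExchangeFactor a b c ε ≤ (a - c) ^ 2 :=
  calc spinExchangeFactor a b c ε ≤ (√(a ^ 2 + ε / 2 * b ^ 2) - √(c ^ 2 + ε / 2 * b ^ 2)) ^ 2 :=
        mul_le_of_le_one_left (sq_nonneg _) (by linarith)
    _ ≤ (a - c) ^ 2 := sub_sq_sqrt_add_le a c (by positivity)

theorem hasDerivAt_spinExchangeFactor {a c : ℝ} (b : ℝ) (ha : 0 < a) (hc : 0 < c) :
    HasDerivAt (spinExchangeFactor a b c) (-((a - c) ^ 2 * (1 + b ^ 2 / (2 * (a * c))))) 0 := by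
  have hsqrt : ∀ {d : ℝ}, 0 < d →
      HasDerivAt (fun ε : ℝ => √(d ^ 2 + ε / 2 * b ^ 2)) (b ^ 2 / (4 * d)) 0 := fun {d} hd => by
    refine (((((hasDerivAt_id (0 : ℝ)).div_const 2).mul_const (b ^ 2)).const_add (d ^ 2)).sqrt
      (by simp only [id_eq, zero_div, zero_mul, add_zero]; positivity)).congr_deriv ?_
    simp only [id_eq, zero_div, zero_mul, add_zero, Real.sqrt_sq hd.le]
    field_simp
    ring
  refine (((hasDerivAt_const (0 : ℝ) (1 : ℝ)).sub (hasDerivAt_id 0)).mul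
    (((hsqrt ha).sub (hsqrt hc)).pow 2)).congr_deriv ?_
  simp only [Pi.pow_apply, Pi.sub_apply, id_eq, zero_div, zero_mul, add_zero, Real.sqrt_sq ha.le,
    Real.sqrt_sq hc.le]
  field_simp
  ring

def transferGain (βs : ℝ) (u1 u0 um1 : E3 → ℝ) (ε : ℝ) (x : E3) : ℝ :=
  (Sfun u1 u0 x / (u1 x ^ 2 + ε / 2 * u0 x ^ 2)
      + Sfun um1 u0 x / (um1 x ^ 2 + ε / 2 * u0 x ^ 2)) / 2
    + 2 * βs * u0 x ^ 2 * ((u1 x - um1 x) ^ 2 - spinExchangeFactor (u1 x) (u0 x) (um1 x) ε) / ε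

section TransferGain

variable {βs ε : ℝ} {u1 u0 um1 : E3 → ℝ} {x : E3}

theorem energyDensity_perturb_sub (V : E3 → ℝ) (βn q : ℝ) (h1 : DifferentiableAt ℝ u1 x)
    (h0 : DifferentiableAt ℝ u0 x) (hm1 : DifferentiableAt ℝ um1 x) (hu1 : 0 < u1 x)
    (hum1 : 0 < um1 x) (hε0 : 0 < ε) (hε1 : ε ≤ 1) :
    energyDensity V βn βs q (sqrtSqAdd u1 u0 (ε / 2)) (fun y => √(1 - ε) * u0 y)
        (sqrtSqAdd um1 u0 (ε / 2)) x - energyDensity V βn βs q u1 u0 um1 x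
      = ε * (q * u0 x ^ 2 - transferGain βs u1 u0 um1 ε x) := by
  have ht : 0 ≤ ε / 2 := by linarith
  rw [energyDensity, energyDensity, nsq_perturb hε0.le hε1,
    norm_gradient_sqrtSqAdd_sq h1 h0 ht (by positivity),
    norm_gradient_sqrtSqAdd_sq hm1 h0 ht (by positivity), gradient_const_mul _ h0, norm_smul,
    mul_pow, Real.norm_eq_abs, sq_abs, sq_sqrtSqAdd _ _ ht, sq_sqrtSqAdd _ _ ht, mul_pow,
    Real.sq_sqrt (by linarith), transferGain, spinExchangeFactor, Sfun, Sfun]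
  simp only [sqrtSqAdd]
  field_simp
  ring

theorem transferGain_nonneg (hβs : 0 ≤ βs) (hε0 : 0 < ε) : 0 ≤ transferGain βs u1 u0 um1 ε x := by
  have hspin := spinExchangeFactor_le_sq (u1 x) (u0 x) (um1 x) hε0.le
  unfold transferGain Sfun
  have := sub_nonneg.2 hspin
  positivity

theorem tendsto_transferGain (βs : ℝ) (hu1 : 0 < u1 x) (hum1 : 0 < um1 x) :
    Tendsto (fun ε => transferGain βs u1 u0 um1 ε x) (𝓝[>] 0)
      (𝓝 (1 / 2 * (Sfun u1 u0 x / u1 x ^ 2 + Sfun um1 u0 x / um1 x ^ 2)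
        + βs * (u0 x ^ 2 * (u1 x - um1 x) ^ 2 * (2 + u0 x ^ 2 / (u1 x * um1 x))))) := by
  have hkin : Tendsto (fun ε => (Sfun u1 u0 x / (u1 x ^ 2 + ε / 2 * u0 x ^ 2)
      + Sfun um1 u0 x / (um1 x ^ 2 + ε / 2 * u0 x ^ 2)) / 2) (𝓝[>] 0)
      (𝓝 ((Sfun u1 u0 x / u1 x ^ 2 + Sfun um1 u0 x / um1 x ^ 2) / 2)) := by
    refine tendsto_nhdsWithin_of_tendsto_nhds ?_
    have : ContinuousAt (fun ε : ℝ => (Sfun u1 u0 x / (u1 x ^ 2 + ε / 2 * u0 x ^ 2)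
        + Sfun um1 u0 x / (um1 x ^ 2 + ε / 2 * u0 x ^ 2)) / 2) 0 := by
      fun_prop (disch := positivity)
    simpa using this.tendsto
  have hspin := ((hasDerivAt_spinExchangeFactor (u0 x) hu1 hum1).tendsto_slope_zero_right).const_mul
    (-(2 * βs * u0 x ^ 2))
  rw [spinExchangeFactor, zero_div, zero_mul, add_zero, add_zero, Real.sqrt_sq hu1.le,
    Real.sqrt_sq hum1.le] at hspin
  convert hkin.add hspin using 2
  · simp only [transferGain, zero_add, sub_zero, one_mul, smul_eq_mul]
    ring
  · field_simp

end TransferGain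

theorem IsGroundState.integral_transferGain_le {V : E3 → ℝ} {βn βs q M ε : ℝ}
    {u1 u0 um1 : E3 → ℝ} (hu : IsGroundState V βn βs q M u1 u0 um1) (hu1 : ∀ x, 0 < u1 x)
    (hum1 : ∀ x, 0 < um1 x) (hε0 : 0 < ε) (hε1 : ε ≤ 1) :
    Integrable (transferGain βs u1 u0 um1 ε)
      ∧ ∫ x, transferGain βs u1 u0 um1 ε x ≤ q * ∫ x, u0 x ^ 2 := by
  obtain ⟨hA, hmin⟩ := hu
  have hAε := hA.perturb hu1 hum1 hε0.le hε1
  have hle := hmin _ _ _ hAε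
  rw [energy_eq_integral_energyDensity, energy_eq_integral_energyDensity] at hle
  have hdiff : Integrable fun x =>
      energyDensity V βn βs q (sqrtSqAdd u1 u0 (ε / 2)) (fun y => √(1 - ε) * u0 y)
        (sqrtSqAdd um1 u0 (ε / 2)) x - energyDensity V βn βs q u1 u0 um1 x :=
    (hAε.integrable_energyDensity βn βs q).sub (hA.integrable_energyDensity βn βs q)
  have hgain : (fun x => q * u0 x ^ 2 - ε⁻¹ *
      (energyDensity V βn βs q (sqrtSqAdd u1 u0 (ε / 2)) (fun y => √(1 - ε) * u0 y)
        (sqrtSqAdd um1 u0 (ε / 2)) x - energyDensity V βn βs q u1 u0 um1 x))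
      = transferGain βs u1 u0 um1 ε := by
    funext x
    rw [energyDensity_perturb_sub V βn q (hA.smooth1.differentiable one_ne_zero x)
      (hA.smooth0.differentiable one_ne_zero x) (hA.smoothm1.differentiable one_ne_zero x)
      (hu1 x) (hum1 x) hε0 hε1]
    field_simp
    ring
  rw [← hgain]
  refine ⟨(hA.l2_0.const_mul q).sub (hdiff.const_mul ε⁻¹), ?_⟩
  rw [integral_sub (hA.l2_0.const_mul q) (hdiff.const_mul ε⁻¹), integral_const_mul,
    integral_const_mul, integral_sub (hAε.integrable_energyDensity βn βs q)
      (hA.integrable_energyDensity βn βs q)]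
  have := mul_nonneg (inv_nonneg.2 hε0.le) (sub_nonneg.2 hle)
  linarith

theorem IsGroundState.integral_limit_transferGain_le {V : E3 → ℝ} {βn βs q M : ℝ}
    {u1 u0 um1 : E3 → ℝ} (hu : IsGroundState V βn βs q M u1 u0 um1) (hβs : 0 ≤ βs)
    (hu1 : ∀ x, 0 < u1 x) (hum1 : ∀ x, 0 < um1 x) :
    Integrable (fun x => 1 / 2 * (Sfun u1 u0 x / u1 x ^ 2 + Sfun um1 u0 x / um1 x ^ 2)
        + βs * (u0 x ^ 2 * (u1 x - um1 x) ^ 2 * (2 + u0 x ^ 2 / (u1 x * um1 x))))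
      ∧ ∫ x, (1 / 2 * (Sfun u1 u0 x / u1 x ^ 2 + Sfun um1 u0 x / um1 x ^ 2)
        + βs * (u0 x ^ 2 * (u1 x - um1 x) ^ 2 * (2 + u0 x ^ 2 / (u1 x * um1 x))))
        ≤ q * ∫ x, u0 x ^ 2 := by
  set ε : ℕ → ℝ := fun n => 1 / ((n : ℝ) + 1)
  have hε0 (n : ℕ) : 0 < ε n := Nat.one_div_pos_of_nat
  have hε1 (n : ℕ) : ε n ≤ 1 := div_le_one_of_le₀ (by simp) (by positivity)
  have hε : Tendsto ε atTop (𝓝[>] 0) :=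
    tendsto_nhdsWithin_iff.2 ⟨tendsto_one_div_add_atTop_nhds_zero_nat, .of_forall hε0⟩
  have hbound (n : ℕ) := hu.integral_transferGain_le hu1 hum1 (hε0 n) (hε1 n)
  exact integrable_and_integral_le_of_tendsto (fun n => (hbound n).1)
    (fun n x => transferGain_nonneg hβs (hε0 n))
    (ae_of_all _ fun x => (tendsto_transferGain βs (hu1 x) (hum1 x)).comp hε)
    (fun n => (hbound n).2)

theorem three_component_ground_state_inequality_general (V : E3 → ℝ) (βn βs q M : ℝ)
    (hβs : 0 < βs) (u1 u0 um1 : E3 → ℝ)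
    (hu : IsGroundState V βn βs q M u1 u0 um1)
    (hu1pos : ∀ x, 0 < u1 x) (hum1pos : ∀ x, 0 < um1 x) :
    Integrable (fun x => u0 x ^ 2 * (u1 x - um1 x) ^ 2 * (2 + u0 x ^ 2 / (u1 x * um1 x))) ∧
    Integrable (fun x => Sfun u1 u0 x / u1 x ^ 2 + Sfun um1 u0 x / um1 x ^ 2) ∧
    q * (∫ x : E3, u0 x ^ 2)
      ≥ βs * (∫ x : E3, u0 x ^ 2 * (u1 x - um1 x) ^ 2 * (2 + u0 x ^ 2 / (u1 x * um1 x)))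
        + (1 / 2) * (∫ x : E3, Sfun u1 u0 x / u1 x ^ 2 + Sfun um1 u0 x / um1 x ^ 2) := by
  obtain ⟨hint, hle⟩ := hu.integral_limit_transferGain_le hβs.le hu1pos hum1pos
  set spin := fun x => u0 x ^ 2 * (u1 x - um1 x) ^ 2 * (2 + u0 x ^ 2 / (u1 x * um1 x))
  set kin := fun x => Sfun u1 u0 x / u1 x ^ 2 + Sfun um1 u0 x / um1 x ^ 2
  have hkin : Continuous kin :=
    ((continuous_Sfun hu.1.smooth1 hu.1.smooth0).div (hu.1.smooth1.continuous.pow 2)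
      fun x => pow_ne_zero 2 (hu1pos x).ne').add
    ((continuous_Sfun hu.1.smoothm1 hu.1.smooth0).div (hu.1.smoothm1.continuous.pow 2)
      fun x => pow_ne_zero 2 (hum1pos x).ne')
  have hspin0 (x : E3) : 0 ≤ βs * spin x := by
    have := hu1pos x; have := hum1pos x; positivity
  obtain ⟨hkin_int, hspin_int⟩ := (integrable_add_iff_of_nonneg
    (hkin.const_mul (1 / 2)).aestronglyMeasurable
    (ae_of_all _ fun x => by unfold kin Sfun; positivity) (ae_of_all _ hspin0)).1 hint
  rw [integrable_const_mul_iff (by norm_num)] at hkin_int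
  rw [integrable_const_mul_iff hβs.ne'.isUnit] at hspin_int
  refine ⟨hspin_int, hkin_int, ?_⟩
  rw [integral_add (hkin_int.const_mul _) (hspin_int.const_mul _), integral_const_mul,
    integral_const_mul] at hle
  linarith

/-- the inequality satisfied by a three-component ground state. -/
theorem three_component_ground_state_inequality (V : E3 → ℝ) (βn βs q M : ℝ)
    (hV : TrapPotential V) (hβn : 0 < βn) (hβs : 0 < βs) (hq : 0 ≤ q)
    (hM0 : 0 < M) (hM1 : M < 1) (u1 u0 um1 : E3 → ℝ)
    (hu : IsGroundState V βn βs q M u1 u0 um1)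
    (hu1pos : ∀ x, 0 < u1 x) (hum1pos : ∀ x, 0 < um1 x) :
    Integrable (fun x => u0 x ^ 2 * (u1 x - um1 x) ^ 2 * (2 + u0 x ^ 2 / (u1 x * um1 x))) ∧
    Integrable (fun x => Sfun u1 u0 x / u1 x ^ 2 + Sfun um1 u0 x / um1 x ^ 2) ∧
    q * (∫ x : E3, u0 x ^ 2)
      ≥ βs * (∫ x : E3, u0 x ^ 2 * (u1 x - um1 x) ^ 2 * (2 + u0 x ^ 2 / (u1 x * um1 x)))
        + (1 / 2) * (∫ x : E3, Sfun u1 u0 x / u1 x ^ 2 + Sfun um1 u0 x / um1 x ^ 2) :=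
  three_component_ground_state_inequality_general V βn βs q M hβs u1 u0 um1 hu hu1pos hum1pos
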